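/- Pointwise assembly of lifting structures in a gluing category: let M : C₀ ⥤ C₁ be lex with universal maps π₀, π₁, and let τ be the induced universal Reedy fibration in Gl(M). For an object B ∈ Gl(M) and a map s : Y ⟶ E in the Reedy-fibrant slice over B, a choice of uniform left lifting structures of the 0-component s₀ against π₀ (over B₀) and of the 1-component s₁ against π₁ (over B₁) induces a uniform left lifting structure of s against τ (over B), compatible with reindexing along maps B' ⟶ B. (Lifts in Gl(M) are produced by first lifting the 0-component and then lifting the 1-component against the fibrant relative matching map.) -/

import Mathlib

open CategoryTheory CategoryTheory.Limits

/-- A map is a `π`-fibration if it arises as a pullback of the universal map `π`. -/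
def IsPiFib {C : Type*} [Category C] {Ut U : C} (π : Ut ⟶ U) {E B : C} (p : E ⟶ B) : Prop :=
  ∃ (c : B ⟶ U) (t : E ⟶ Ut), IsPullback t p π c

variable {C : Type*} [Category C] [HasPullbacks C]

/-- Reindexing of a map `s : Y ⟶ E` over `B` along `f : B' ⟶ B`. -/
noncomputable def reidx {Y E B B' : C} (yB : Y ⟶ B) (eB : E ⟶ B) (s : Y ⟶ E)
    (hs : s ≫ eB = yB) (f : B' ⟶ B) : pullback yB f ⟶ pullback eB f :=
  pullback.map yB f eB f s (𝟙 B') (𝟙 B) (by simp [hs]) (by simp)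

/-- The canonical comparison `(g ≫ f)^*Y ⟶ f^*Y` for `g : B'' ⟶ B'`, `f : B' ⟶ B`. -/
noncomputable def restr {Y B B' B'' : C} (yB : Y ⟶ B) (f : B' ⟶ B) (g : B'' ⟶ B') :
    pullback yB (g ≫ f) ⟶ pullback yB f :=
  pullback.map yB (g ≫ f) yB f (𝟙 Y) g (𝟙 B) (by simp) (by simp)

/-- A uniform left lifting structure of `s : Y ⟶ E` (over `B`) against the class `Fib`:
a reindexing-stable choice of diagonal fillers, making both triangles commute, for all
lifting problems of pullbacks of `s` against maps in `Fib`. -/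
structure UniformLifting (Fib : ∀ ⦃P Q : C⦄, (P ⟶ Q) → Prop)
    {Y E B : C} (yB : Y ⟶ B) (eB : E ⟶ B) (s : Y ⟶ E) (hs : s ≫ eB = yB) : Type _ where
  lift : ∀ {B' : C} (f : B' ⟶ B) {P Q : C} (w : P ⟶ Q), Fib w →
    ∀ (top : pullback yB f ⟶ P) (bot : pullback eB f ⟶ Q),
      reidx yB eB s hs f ≫ bot = top ≫ w → (pullback eB f ⟶ P)
  upper : ∀ {B' : C} (f : B' ⟶ B) {P Q : C} (w : P ⟶ Q) (hw : Fib w)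
    (top : pullback yB f ⟶ P) (bot : pullback eB f ⟶ Q)
    (h : reidx yB eB s hs f ≫ bot = top ≫ w),
    reidx yB eB s hs f ≫ lift f w hw top bot h = top
  lower : ∀ {B' : C} (f : B' ⟶ B) {P Q : C} (w : P ⟶ Q) (hw : Fib w)
    (top : pullback yB f ⟶ P) (bot : pullback eB f ⟶ Q)
    (h : reidx yB eB s hs f ≫ bot = top ≫ w),
    lift f w hw top bot h ≫ w = bot
  uniform : ∀ {B'' B' : C} (g : B'' ⟶ B') (f : B' ⟶ B) {P Q : C} (w : P ⟶ Q) (hw : Fib w)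
    (top : pullback yB f ⟶ P) (bot : pullback eB f ⟶ Q)
    (h : reidx yB eB s hs f ≫ bot = top ≫ w)
    (top' : pullback yB (g ≫ f) ⟶ P) (bot' : pullback eB (g ≫ f) ⟶ Q)
    (h' : reidx yB eB s hs (g ≫ f) ≫ bot' = top' ≫ w),
    top' = restr yB f g ≫ top → bot' = restr eB f g ≫ bot →
    lift (g ≫ f) w hw top' bot' h' = restr eB f g ≫ lift f w hw top bot h

section Glue

variable {C₀ C₁ : Type*} [Category C₀] [Category C₁]
  [HasFiniteLimits C₀] [HasFiniteLimits C₁]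

/-- A map in the gluing category `Gl(M) = C₁ ↓ M` is a Reedy fibration if its
`C₀`-component is a `π₀`-fibration and its relative matching map is a `π₁`-fibration. -/
def IsReedyFib (M : C₀ ⥤ C₁) {Ut₀ U₀ : C₀} (π₀ : Ut₀ ⟶ U₀) {Ut₁ U₁ : C₁} (π₁ : Ut₁ ⟶ U₁)
    {E B : Comma (𝟭 C₁) M} (f : E ⟶ B) : Prop :=
  IsPiFib π₀ f.right ∧
    IsPiFib π₁
      (pullback.lift f.left E.hom (by simpa using f.w) :
        E.left ⟶ pullback B.hom (M.map f.right))

end Glue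

/-!
Since `M` preserves pullbacks, pullbacks in `Gl(M)` are computed componentwise, so a lifting
problem of a pullback of `s` against `w` has as `C₀`-component a lifting problem of a pullback of
`s₀` against `w₀`, which `L₀` solves by some `l₀`. Once `l₀` is fixed, a compatible
`C₁`-component is exactly a lift of the square with bottom map `(bot₁, M l₀)` against the
relative matching map of `w`, which `L₁` solves. Both choices commute with restriction along the
base, so the assembled lifts are again uniform.
-/

namespace CategoryTheory.Comma

variable {J : Type*} [Category J] {A B T : Type*} [Category A] [Category B] [Category T]
  {L : A ⥤ T} {R : B ⥤ T} [HasLimitsOfShape J A] [HasLimitsOfShape J B]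
  [PreservesLimitsOfShape J R]

instance preservesLimitsOfShape_fst : PreservesLimitsOfShape J (Comma.fst L R) where
  preservesLimit :=
    preservesLimit_of_preserves_limit_cone
      (coneOfPreservesIsLimit _ (limit.isLimit _) (limit.isLimit _)) (limit.isLimit _)

instance preservesLimitsOfShape_snd : PreservesLimitsOfShape J (Comma.snd L R) where
  preservesLimit :=
    preservesLimit_of_preserves_limit_cone
      (coneOfPreservesIsLimit _ (limit.isLimit _) (limit.isLimit _)) (limit.isLimit _)

end CategoryTheory.Comma

section Reindexing

variable {Y E B B' B'' : C}

@[simp]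
lemma reidx_fst (yB : Y ⟶ B) (eB : E ⟶ B) (s : Y ⟶ E) (hs : s ≫ eB = yB) (f : B' ⟶ B) :
    reidx yB eB s hs f ≫ pullback.fst eB f = pullback.fst yB f ≫ s :=
  pullback.lift_fst _ _ _

@[simp]
lemma reidx_snd (yB : Y ⟶ B) (eB : E ⟶ B) (s : Y ⟶ E) (hs : s ≫ eB = yB) (f : B' ⟶ B) :
    reidx yB eB s hs f ≫ pullback.snd eB f = pullback.snd yB f :=
  (pullback.lift_snd _ _ _).trans (Category.comp_id _)

@[simp]
lemma restr_fst (yB : Y ⟶ B) (f : B' ⟶ B) (g : B'' ⟶ B') :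
    restr yB f g ≫ pullback.fst yB f = pullback.fst yB (g ≫ f) :=
  (pullback.lift_fst _ _ _).trans (Category.comp_id _)

@[simp]
lemma restr_snd (yB : Y ⟶ B) (f : B' ⟶ B) (g : B'' ⟶ B') :
    restr yB f g ≫ pullback.snd yB f = pullback.snd yB (g ≫ f) ≫ g :=
  pullback.lift_snd _ _ _

lemma eq_restr {yB : Y ⟶ B} {f : B' ⟶ B} {g : B'' ⟶ B'}
    (r : pullback yB (g ≫ f) ⟶ pullback yB f)
    (h₁ : r ≫ pullback.fst yB f = pullback.fst yB (g ≫ f))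
    (h₂ : r ≫ pullback.snd yB f = pullback.snd yB (g ≫ f) ≫ g) : r = restr yB f g :=
  pullback.hom_ext (by simp [h₁]) (by simp [h₂])

end Reindexing

namespace UniformLifting

variable {Fib : ∀ ⦃P Q : C⦄, (P ⟶ Q) → Prop} {Y E B : C} {yB : Y ⟶ B} {eB : E ⟶ B}
  {s : Y ⟶ E} {hs : s ≫ eB = yB}

/-- `uniform` for a base change `k` that is only propositionally `g ≫ f` (such as
`F.map (g ≫ f)`), with the restriction maps given through their projections. -/
lemma uniform_of_comp_eq (L : UniformLifting Fib yB eB s hs) {B'' B' : C} (g : B'' ⟶ B')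
    (f : B' ⟶ B) {k : B'' ⟶ B} (hk : g ≫ f = k)
    (rY : pullback yB k ⟶ pullback yB f) (hrY₁ : rY ≫ pullback.fst yB f = pullback.fst yB k)
    (hrY₂ : rY ≫ pullback.snd yB f = pullback.snd yB k ≫ g)
    (rE : pullback eB k ⟶ pullback eB f) (hrE₁ : rE ≫ pullback.fst eB f = pullback.fst eB k)
    (hrE₂ : rE ≫ pullback.snd eB f = pullback.snd eB k ≫ g)
    {P Q : C} (w : P ⟶ Q) (hw : Fib w)
    (top : pullback yB f ⟶ P) (bot : pullback eB f ⟶ Q)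
    (h : reidx yB eB s hs f ≫ bot = top ≫ w)
    (top' : pullback yB k ⟶ P) (bot' : pullback eB k ⟶ Q)
    (h' : reidx yB eB s hs k ≫ bot' = top' ≫ w)
    (htop : top' = rY ≫ top) (hbot : bot' = rE ≫ bot) :
    L.lift k w hw top' bot' h' = rE ≫ L.lift f w hw top bot h := by
  subst hk
  obtain rfl := eq_restr rY hrY₁ hrY₂
  obtain rfl := eq_restr rE hrE₁ hrE₂
  exact L.uniform g f w hw top bot h top' bot' h' htop hbot

end UniformLifting

section Transport

variable {D : Type*} [Category D] [HasPullbacks D] (F : C ⥤ D)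
  [PreservesLimitsOfShape WalkingCospan F]

lemma map_reidx_comp_iso_hom {Y E B B' : C} (yB : Y ⟶ B) (eB : E ⟶ B) (s : Y ⟶ E)
    (hs : s ≫ eB = yB) (hsF : F.map s ≫ F.map eB = F.map yB) (f : B' ⟶ B) :
    F.map (reidx yB eB s hs f) ≫ (PreservesPullback.iso F eB f).hom =
      (PreservesPullback.iso F yB f).hom ≫
        reidx (F.map yB) (F.map eB) (F.map s) hsF (F.map f) := by
  ext <;> simp [← Functor.map_comp]

section Restriction

variable {Z B B' B'' : C} (zB : Z ⟶ B) (f : B' ⟶ B) (g : B'' ⟶ B')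

lemma iso_inv_map_restr_iso_hom_fst :
    ((PreservesPullback.iso F zB (g ≫ f)).inv ≫ F.map (restr zB f g) ≫
      (PreservesPullback.iso F zB f).hom) ≫ pullback.fst _ _ = pullback.fst _ _ := by
  simp [← Functor.map_comp]

lemma iso_inv_map_restr_iso_hom_snd :
    ((PreservesPullback.iso F zB (g ≫ f)).inv ≫ F.map (restr zB f g) ≫
      (PreservesPullback.iso F zB f).hom) ≫ pullback.snd _ _ = pullback.snd _ _ ≫ F.map g := by
  rw [Category.assoc, Category.assoc, PreservesPullback.iso_hom_snd, ← F.map_comp, restr_snd,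
    F.map_comp (pullback.snd zB (g ≫ f)) g, PreservesPullback.iso_inv_snd_assoc]

end Restriction

variable {Fib : ∀ ⦃P Q : D⦄, (P ⟶ Q) → Prop} {Y E B : C} {yB : Y ⟶ B} {eB : E ⟶ B}
  {s : Y ⟶ E} {hs : s ≫ eB = yB} {hsF : F.map s ≫ F.map eB = F.map yB}
  (L : UniformLifting Fib (F.map yB) (F.map eB) (F.map s) hsF)

lemma reidx_map_comp_iso_inv_comp {B' : C} (f : B' ⟶ B) {P Q : D} (w : P ⟶ Q)
    (top : F.obj (pullback yB f) ⟶ P) (bot : F.obj (pullback eB f) ⟶ Q)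
    (h : F.map (reidx yB eB s hs f) ≫ bot = top ≫ w) :
    reidx (F.map yB) (F.map eB) (F.map s) hsF (F.map f) ≫
        (PreservesPullback.iso F eB f).inv ≫ bot =
      ((PreservesPullback.iso F yB f).inv ≫ top) ≫ w := by
  rw [← cancel_epi (PreservesPullback.iso F yB f).hom,
    ← reassoc_of% map_reidx_comp_iso_hom F yB eB s hs hsF f, Iso.hom_inv_id_assoc, h,
    Category.assoc, Iso.hom_inv_id_assoc]

namespace UniformLifting

/-- Lifts for the `F`-images of lifting problems of pullbacks of `s`, obtained from `L` through
the comparison `F (f^* E) ≅ (F f)^* (F E)`. -/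
noncomputable def liftAlong {B' : C} (f : B' ⟶ B) {P Q : D} (w : P ⟶ Q) (hw : Fib w)
    (top : F.obj (pullback yB f) ⟶ P) (bot : F.obj (pullback eB f) ⟶ Q)
    (h : F.map (reidx yB eB s hs f) ≫ bot = top ≫ w) : F.obj (pullback eB f) ⟶ P :=
  (PreservesPullback.iso F eB f).hom ≫
    L.lift (F.map f) w hw ((PreservesPullback.iso F yB f).inv ≫ top)
      ((PreservesPullback.iso F eB f).inv ≫ bot)
      (reidx_map_comp_iso_inv_comp F f w top bot h)

variable {F L}
variable {B' : C} (f : B' ⟶ B) {P Q : D} (w : P ⟶ Q) (hw : Fib w)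
    (top : F.obj (pullback yB f) ⟶ P) (bot : F.obj (pullback eB f) ⟶ Q)
    (h : F.map (reidx yB eB s hs f) ≫ bot = top ≫ w)

lemma map_reidx_liftAlong :
    F.map (reidx yB eB s hs f) ≫ L.liftAlong F f w hw top bot h = top := by
  rw [liftAlong, reassoc_of% map_reidx_comp_iso_hom F yB eB s hs hsF, L.upper,
    Iso.hom_inv_id_assoc]

lemma liftAlong_comp : L.liftAlong F f w hw top bot h ≫ w = bot := by
  rw [liftAlong, Category.assoc, L.lower, Iso.hom_inv_id_assoc]

lemma liftAlong_restr {B'' : C} (g : B'' ⟶ B')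
    (top' : F.obj (pullback yB (g ≫ f)) ⟶ P) (bot' : F.obj (pullback eB (g ≫ f)) ⟶ Q)
    (h' : F.map (reidx yB eB s hs (g ≫ f)) ≫ bot' = top' ≫ w)
    (htop : top' = F.map (restr yB f g) ≫ top) (hbot : bot' = F.map (restr eB f g) ≫ bot) :
    L.liftAlong F (g ≫ f) w hw top' bot' h' =
      F.map (restr eB f g) ≫ L.liftAlong F f w hw top bot h := by
  rw [liftAlong, liftAlong, L.uniform_of_comp_eq (F.map g) (F.map f) (F.map_comp g f).symm _
    (iso_inv_map_restr_iso_hom_fst F yB f g) (iso_inv_map_restr_iso_hom_snd F yB f g) _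
    (iso_inv_map_restr_iso_hom_fst F eB f g) (iso_inv_map_restr_iso_hom_snd F eB f g) w hw
    ((PreservesPullback.iso F yB f).inv ≫ top) ((PreservesPullback.iso F eB f).inv ≫ bot)
    (reidx_map_comp_iso_inv_comp F f w top bot h)]
  · simp only [Category.assoc, Iso.hom_inv_id_assoc]
  · simp only [htop, Category.assoc, Iso.hom_inv_id_assoc]
  · simp only [hbot, Category.assoc, Iso.hom_inv_id_assoc]

end UniformLifting

end Transport

lemma CategoryTheory.CommaMorphism.left_comp_hom {C₀ C₁ : Type*} [Category C₀] [Category C₁]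
    {M : C₀ ⥤ C₁} {X Y : Comma (𝟭 C₁) M} (f : X ⟶ Y) :
    f.left ≫ Y.hom = X.hom ≫ M.map f.right :=
  f.w

section RelativeMatching

variable {C₀ C₁ : Type*} [Category C₀] [Category C₁] [HasPullbacks C₁] (M : C₀ ⥤ C₁)

noncomputable def relMatchingMap {P Q : Comma (𝟭 C₁) M} (w : P ⟶ Q) :
    P.left ⟶ pullback Q.hom (M.map w.right) :=
  pullback.lift w.left P.hom w.left_comp_hom

variable {M} {X P Q : Comma (𝟭 C₁) M} (w : P ⟶ Q)

@[simp]
lemma relMatchingMap_fst : relMatchingMap M w ≫ pullback.fst _ _ = w.left :=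
  pullback.lift_fst _ _ _

@[simp]
lemma relMatchingMap_snd : relMatchingMap M w ≫ pullback.snd _ _ = P.hom :=
  pullback.lift_snd _ _ _

/-- Once the `C₀`-component `l₀` of a lift of a square with bottom `bot` against `w` is chosen,
the `C₁`-component has to lift against `relMatchingMap M w`, with this bottom map. -/
noncomputable def relMatchingBot (bot : X ⟶ Q) (l₀ : X.right ⟶ P.right)
    (hl₀ : l₀ ≫ w.right = bot.right) : X.left ⟶ pullback Q.hom (M.map w.right) :=
  pullback.lift bot.left (X.hom ≫ M.map l₀)
    (by rw [bot.left_comp_hom, Category.assoc, ← M.map_comp, hl₀])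

section

variable (bot : X ⟶ Q) (l₀ : X.right ⟶ P.right) (hl₀ : l₀ ≫ w.right = bot.right)

@[simp]
lemma relMatchingBot_fst : relMatchingBot w bot l₀ hl₀ ≫ pullback.fst _ _ = bot.left :=
  pullback.lift_fst _ _ _

@[simp]
lemma relMatchingBot_snd : relMatchingBot w bot l₀ hl₀ ≫ pullback.snd _ _ = X.hom ≫ M.map l₀ :=
  pullback.lift_snd _ _ _

lemma left_comp_relMatchingBot {A : Comma (𝟭 C₁) M} (i : A ⟶ X) (top : A ⟶ P)
    (h : i ≫ bot = top ≫ w) (hi : i.right ≫ l₀ = top.right) :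
    i.left ≫ relMatchingBot w bot l₀ hl₀ = top.left ≫ relMatchingMap M w := by
  apply pullback.hom_ext
  · simp [← Comma.comp_left, h]
  · simp [reassoc_of% i.left_comp_hom, ← M.map_comp, hi, top.left_comp_hom]

lemma relMatchingBot_eq_comp {X' : Comma (𝟭 C₁) M} (r : X' ⟶ X) (bot' : X' ⟶ Q)
    (l₀' : X'.right ⟶ P.right) (hl₀' : l₀' ≫ w.right = bot'.right) (hbot : bot' = r ≫ bot)
    (hl : l₀' = r.right ≫ l₀) :
    relMatchingBot w bot' l₀' hl₀' = r.left ≫ relMatchingBot w bot l₀ hl₀ := by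
  subst hbot hl
  apply pullback.hom_ext
  · simp
  · simp [reassoc_of% r.left_comp_hom]

end

variable {w} {bot : X ⟶ Q} {l₀ : X.right ⟶ P.right} {hl₀ : l₀ ≫ w.right = bot.right}
  {l₁ : X.left ⟶ P.left} (hl₁ : l₁ ≫ relMatchingMap M w = relMatchingBot w bot l₀ hl₀)

include hl₁ in
lemma comp_left_of_comp_relMatchingMap : l₁ ≫ w.left = bot.left := by
  simpa using congrArg (· ≫ pullback.fst _ _) hl₁

noncomputable def homOfRelMatching : X ⟶ P where
  left := l₁
  right := l₀
  w := by simpa using congrArg (· ≫ pullback.snd _ _) hl₁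

lemma homOfRelMatching_comp : homOfRelMatching hl₁ ≫ w = bot :=
  Comma.hom_ext _ _ (comp_left_of_comp_relMatchingMap hl₁) hl₀

end RelativeMatching

namespace UniformLifting

variable {C₀ C₁ : Type*} [Category C₀] [Category C₁] [HasPullbacks C₀] [HasPullbacks C₁]
  {M : C₀ ⥤ C₁} [PreservesLimitsOfShape WalkingCospan M]
  {Fib₀ : ∀ ⦃P Q : C₀⦄, (P ⟶ Q) → Prop} {Fib₁ : ∀ ⦃P Q : C₁⦄, (P ⟶ Q) → Prop}
  {B Y E : Comma (𝟭 C₁) M} {yB : Y ⟶ B} {eB : E ⟶ B} {s : Y ⟶ E} {hs : s ≫ eB = yB}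
  {hs₀ : s.right ≫ eB.right = yB.right} {hs₁ : s.left ≫ eB.left = yB.left}
  (L₀ : UniformLifting Fib₀ yB.right eB.right s.right hs₀)
  (L₁ : UniformLifting Fib₁ yB.left eB.left s.left hs₁)

section Square

variable {B' : Comma (𝟭 C₁) M} (f : B' ⟶ B) {P Q : Comma (𝟭 C₁) M} (w : P ⟶ Q)
  (hw : Fib₀ w.right ∧ Fib₁ (relMatchingMap M w))
  (top : pullback yB f ⟶ P) (bot : pullback eB f ⟶ Q) (h : reidx yB eB s hs f ≫ bot = top ≫ w)

noncomputable def glueLiftRight : (pullback eB f).right ⟶ P.right :=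
  L₀.liftAlong (Comma.snd (𝟭 C₁) M) f w.right hw.1 top.right bot.right
    (congrArg CommaMorphism.right h)

lemma reidx_right_comp_glueLiftRight :
    (reidx yB eB s hs f).right ≫ L₀.glueLiftRight f w hw top bot h = top.right :=
  map_reidx_liftAlong (F := Comma.snd (𝟭 C₁) M) (L := L₀) ..

lemma glueLiftRight_comp : L₀.glueLiftRight f w hw top bot h ≫ w.right = bot.right :=
  liftAlong_comp (F := Comma.snd (𝟭 C₁) M) (L := L₀) ..

noncomputable def glueLiftLeft : (pullback eB f).left ⟶ P.left :=
  L₁.liftAlong (Comma.fst (𝟭 C₁) M) f (relMatchingMap M w) hw.2 top.left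
    (relMatchingBot w bot _ (L₀.glueLiftRight_comp f w hw top bot h))
    (left_comp_relMatchingBot _ _ _ _ _ _ h (L₀.reidx_right_comp_glueLiftRight f w hw top bot h))

lemma glueLiftLeft_comp_relMatchingMap :
    L₀.glueLiftLeft L₁ f w hw top bot h ≫ relMatchingMap M w =
      relMatchingBot w bot _ (L₀.glueLiftRight_comp f w hw top bot h) :=
  liftAlong_comp (F := Comma.fst (𝟭 C₁) M) (L := L₁) ..

lemma reidx_left_comp_glueLiftLeft :
    (reidx yB eB s hs f).left ≫ L₀.glueLiftLeft L₁ f w hw top bot h = top.left :=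
  map_reidx_liftAlong (F := Comma.fst (𝟭 C₁) M) (L := L₁) ..

noncomputable def glueLift : pullback eB f ⟶ P :=
  homOfRelMatching (L₀.glueLiftLeft_comp_relMatchingMap L₁ f w hw top bot h)

lemma reidx_comp_glueLift : reidx yB eB s hs f ≫ L₀.glueLift L₁ f w hw top bot h = top :=
  Comma.hom_ext _ _ (L₀.reidx_left_comp_glueLiftLeft L₁ f w hw top bot h)
    (L₀.reidx_right_comp_glueLiftRight f w hw top bot h)

lemma glueLift_comp : L₀.glueLift L₁ f w hw top bot h ≫ w = bot :=
  homOfRelMatching_comp _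

end Square

section Uniformity

variable {B'' B' : Comma (𝟭 C₁) M} (g : B'' ⟶ B') (f : B' ⟶ B) {P Q : Comma (𝟭 C₁) M}
  (w : P ⟶ Q) (hw : Fib₀ w.right ∧ Fib₁ (relMatchingMap M w))
  (top : pullback yB f ⟶ P) (bot : pullback eB f ⟶ Q) (h : reidx yB eB s hs f ≫ bot = top ≫ w)
  (top' : pullback yB (g ≫ f) ⟶ P) (bot' : pullback eB (g ≫ f) ⟶ Q)
  (h' : reidx yB eB s hs (g ≫ f) ≫ bot' = top' ≫ w)
  (htop : top' = restr yB f g ≫ top) (hbot : bot' = restr eB f g ≫ bot)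

include htop hbot

lemma glueLiftRight_restr :
    L₀.glueLiftRight (g ≫ f) w hw top' bot' h' =
      (restr eB f g).right ≫ L₀.glueLiftRight f w hw top bot h :=
  liftAlong_restr (F := Comma.snd (𝟭 C₁) M) (L := L₀) f w.right hw.1 top.right bot.right _ g
    top'.right bot'.right _ (congrArg CommaMorphism.right htop) (congrArg CommaMorphism.right hbot)

lemma glueLiftLeft_restr :
    L₀.glueLiftLeft L₁ (g ≫ f) w hw top' bot' h' =
      (restr eB f g).left ≫ L₀.glueLiftLeft L₁ f w hw top bot h :=
  liftAlong_restr (F := Comma.fst (𝟭 C₁) M) (L := L₁) f (relMatchingMap M w) hw.2 top.left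
    _ _ g top'.left _ _ (congrArg CommaMorphism.left htop)
    (relMatchingBot_eq_comp w bot _ _ (restr eB f g) bot' _ _ hbot
      (L₀.glueLiftRight_restr g f w hw top bot h top' bot' h' htop hbot))

lemma glueLift_restr :
    L₀.glueLift L₁ (g ≫ f) w hw top' bot' h' = restr eB f g ≫ L₀.glueLift L₁ f w hw top bot h :=
  Comma.hom_ext _ _ (L₀.glueLiftLeft_restr L₁ g f w hw top bot h top' bot' h' htop hbot)
    (L₀.glueLiftRight_restr g f w hw top bot h top' bot' h' htop hbot)

end Uniformity

noncomputable def glue :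
    UniformLifting (fun ⦃P Q : Comma (𝟭 C₁) M⦄ (w : P ⟶ Q) =>
      Fib₀ w.right ∧ Fib₁ (relMatchingMap M w)) yB eB s hs where
  lift f _ _ w hw top bot h := L₀.glueLift L₁ f w hw top bot h
  upper f _ _ w hw top bot h := L₀.reidx_comp_glueLift L₁ f w hw top bot h
  lower f _ _ w hw top bot h := L₀.glueLift_comp L₁ f w hw top bot h
  uniform g f _ _ w hw top bot h top' bot' h' htop hbot :=
    L₀.glueLift_restr L₁ g f w hw top bot h top' bot' h' htop hbot

end UniformLifting

section Glue

variable {C₀ C₁ : Type*} [Category C₀] [Category C₁]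
  [HasFiniteLimits C₀] [HasFiniteLimits C₁]

/-- pointwise assembly of lifting structures in a gluing category: for a
map `s : Y ⟶ E` in the Reedy-fibrant slice over `B ∈ Gl(M)`, uniform left lifting
structures of the `C₀`-component `s₀` against `π₀` over `B₀` and of the `C₁`-component
`s₁` against `π₁` over `B₁` induce a uniform left lifting structure of `s` against the
Reedy fibrations (the `τ`-fibrations) over `B`, compatibly with reindexing. -/
theorem glue_lifting_assembly (M : C₀ ⥤ C₁) [PreservesFiniteLimits M]
    {Ut₀ U₀ : C₀} (π₀ : Ut₀ ⟶ U₀) {Ut₁ U₁ : C₁} (π₁ : Ut₁ ⟶ U₁)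
    {B Y E : Comma (𝟭 C₁) M} (yB : Y ⟶ B) (eB : E ⟶ B)
    (s : Y ⟶ E) (hs : s ≫ eB = yB)
    (L₀ : UniformLifting (fun {_ _} w => IsPiFib π₀ w) yB.right eB.right s.right
      (by rw [← Comma.comp_right, hs]))
    (L₁ : UniformLifting (fun {_ _} w => IsPiFib π₁ w) yB.left eB.left s.left
      (by rw [← Comma.comp_left, hs])) :
    Nonempty (UniformLifting (fun {_ _} w => IsReedyFib M π₀ π₁ w) yB eB s hs) :=
  -- `IsReedyFib M π₀ π₁ w` unfolds to `IsPiFib π₀ w.right ∧ IsPiFib π₁ (relMatchingMap M w)`.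
  ⟨L₀.glue L₁⟩

end Glue
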